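/- Let G be a finite directed acyclic graph with source s and sink t such that every vertex and edge lies on some directed s-t path, and let T be a tracking set for G. Then ∑_{z ∈ V(G)} (outdeg(z) − 1) ≤ (|T| + 1)² − 1. -/

import Mathlib

/-- A directed path from `s` to `t` in the digraph with edge relation `E`,
represented as its list of vertices. -/
def DiPath {V : Type*} (E : V → V → Prop) (s t : V) (p : List V) : Prop :=
  p.Chain' E ∧ p.Nodup ∧ p.head? = some s ∧ p.getLast? = some t

/-- `T` is a tracking set: any two distinct directed `s`-`t` paths intersect `T`
in distinct subsets. -/
def Tracking {V : Type*} [DecidableEq V] (E : V → V → Prop) (s t : V) (T : Finset V) : Prop :=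
  ∀ p q : List V, DiPath E s t p → DiPath E s t q →
    p.toFinset ∩ T = q.toFinset ∩ T → p = q

/-- The digraph with edge relation `E` has no directed cycle. -/
def DiAcyclic {V : Type*} (E : V → V → Prop) : Prop :=
  ∀ v : V, ¬ Relation.TransGen E v v

/-- `z` is reachable from `x` by a directed path avoiding all vertices of
`(T ∪ {t}) \ {x}`, i.e. `z ∈ Z_x`. -/
def ZReach {V : Type*} [DecidableEq V] (E : V → V → Prop) (T : Finset V) (t x z : V) : Prop :=
  ∃ p : List V, p.Chain' E ∧ p.Nodup ∧ p.head? = some x ∧ p.getLast? = some z ∧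
    ∀ v ∈ p, v ∈ T ∪ {t} → v = x

/-- `b` is reachable from `x` by a directed path avoiding all vertices of
`(T ∪ {t}) \ {x, b}`. -/
def BReach {V : Type*} [DecidableEq V] (E : V → V → Prop) (T : Finset V) (t x b : V) : Prop :=
  ∃ p : List V, p.Chain' E ∧ p.Nodup ∧ p.head? = some x ∧ p.getLast? = some b ∧
    ∀ v ∈ p, v ∈ T ∪ {t} → v = x ∨ v = b

/-- The out-degree of `z`. -/
def outdeg {V : Type*} [Fintype V] (E : V → V → Prop) [DecidableRel E] (z : V) : ℕ :=
  (Finset.univ.filter fun y => E z y).card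

/-- The in-degree of `z`. -/
def indeg {V : Type*} [Fintype V] (E : V → V → Prop) [DecidableRel E] (z : V) : ℕ :=
  (Finset.univ.filter fun y => E y z).card

/-!
Every vertex `z ≠ t` lies in some `Z_x` with `x ∈ T ∪ {s}`: walk from `s` to `z` and take the
last vertex of `T ∪ {s}` on the way. Distinct vertices of one `Z_x` have disjoint
out-neighbourhoods: if `z₁ → y` and `z₂ → y`, the two walks `s → x ⇝ zᵢ → y → t` meet `T` in the
same set, because the stretch after `x` avoids `T`, so the tracking property makes them equal.
These out-neighbours lie in `(Z_x ∪ T ∪ {t}) \ {x}`, hence `∑_{z ∈ Z_x} (outdeg z - 1) ≤ |T|`.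
The summands are nonnegative away from `t`, so summing over the at most `|T| + 1` choices of `x`
and adding `outdeg t - 1 = -1` gives the bound.
-/

open Finset Relation

theorem Finset.sum_biUnion_le_sum_sum {ι α M : Type*} [DecidableEq α] [AddCommMonoid M]
    [PartialOrder M] [IsOrderedAddMonoid M] {s : Finset ι} {Z : ι → Finset α} {f : α → M}
    (hf : ∀ a ∈ s.biUnion Z, 0 ≤ f a) : ∑ a ∈ s.biUnion Z, f a ≤ ∑ i ∈ s, ∑ a ∈ Z i, f a := by
  classical
  induction s using Finset.induction_on with
  | empty => simp
  | insert i s hi ih =>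
    rw [biUnion_insert] at hf ⊢
    rw [sum_insert hi]
    calc ∑ a ∈ Z i ∪ s.biUnion Z, f a
        ≤ ∑ a ∈ Z i ∪ s.biUnion Z, f a + ∑ a ∈ Z i ∩ s.biUnion Z, f a :=
          le_add_of_nonneg_right <| sum_nonneg fun a ha =>
            hf a (inter_subset_left.trans subset_union_left ha)
      _ = ∑ a ∈ Z i, f a + ∑ a ∈ s.biUnion Z, f a := sum_union_inter
      _ ≤ _ := add_le_add_right (ih fun a ha => hf a (subset_union_right ha)) _

section Walks

variable {V : Type*} {E : V → V → Prop} {a b c v : V} {p : List V}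

def DiWalk (E : V → V → Prop) (a b : V) (p : List V) : Prop :=
  p.IsChain E ∧ p.head? = some a ∧ p.getLast? = some b

theorem DiWalk.reflTransGen (hp : DiWalk E a b p) : ReflTransGen E a b := by
  obtain ⟨hc, hh, hl⟩ := hp
  have hne : p ≠ [] := by rintro rfl; simp at hh
  have := List.relationReflTransGen_of_exists_isChain p hc hne
  rwa [(List.head_eq_iff_head?_eq_some hne).2 hh,
    (List.getLast_eq_iff_getLast?_eq_some hne).2 hl] at this

theorem DiWalk.concat (hp : DiWalk E a b p) (h : E b c) : DiWalk E a c (p ++ [c]) := by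
  obtain ⟨hc, hh, hl⟩ := hp
  refine ⟨hc.append (.singleton c) ?_, ?_, by simp⟩
  · simp [hl, h]
  · rw [List.head?_append_of_ne_nil _ (by rintro rfl; simp at hh), hh]

theorem DiWalk.append {q : List V} (hp : DiWalk E a b p) (hq : DiWalk E b c (b :: q)) :
    DiWalk E a c (p ++ q) := by
  obtain ⟨hpc, hph, hpl⟩ := hp
  obtain ⟨hqc, -, hql⟩ := hq
  obtain ⟨l, rfl⟩ := List.getLast?_eq_some_iff.1 hpl
  refine ⟨?_, ?_, ?_⟩
  · simpa using hpc.append_overlap (l₂ := [b]) hqc (by simp)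
  · simpa using hph
  · cases q with
    | nil => simpa using hql
    | cons d q => simpa using hql

theorem DiWalk.split (hp : DiWalk E a b p) (hv : v ∈ p) :
    ∃ l₁ l₂, p = l₁ ++ v :: l₂ ∧ DiWalk E a v (l₁ ++ [v]) ∧ DiWalk E v b (v :: l₂) := by
  obtain ⟨hc, hh, hl⟩ := hp
  obtain ⟨l₁, l₂, rfl⟩ := List.append_of_mem hv
  obtain ⟨hc₁, hc₂⟩ := List.isChain_split.1 hc
  refine ⟨l₁, l₂, rfl, ⟨hc₁, ?_, by simp⟩, ⟨hc₂, rfl, ?_⟩⟩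
  · cases l₁ <;> simpa using hh
  · simpa using hl

end Walks

section Acyclic

variable {V : Type*} {E : V → V → Prop} {a b c x y z : V} {p : List V}

theorem DiAcyclic.nodup_of_isChain (h : DiAcyclic E) (hp : p.IsChain E) : p.Nodup :=
  ((hp.imp fun _ _ => .single).pairwise : p.Pairwise (TransGen E)).imp
    fun {a b} hab (hba : a = b) => h _ (hba ▸ hab)

theorem DiAcyclic.diPath_iff (h : DiAcyclic E) : DiPath E a b p ↔ DiWalk E a b p :=
  ⟨fun ⟨hc, _, hh, hl⟩ => ⟨hc, hh, hl⟩, fun ⟨hc, hh, hl⟩ => ⟨hc, h.nodup_of_isChain hc, hh, hl⟩⟩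

variable [DecidableEq V] {T : Finset V} {t : V}

theorem zReach_iff_exists_diWalk (h : DiAcyclic E) :
    ZReach E T t x z ↔ ∃ r, DiWalk E x z (x :: r) ∧ ∀ v ∈ r, v ∉ T ∪ {t} := by
  constructor
  · rintro ⟨p, hc, hnd, hh, hl, hT⟩
    obtain ⟨r, rfl⟩ := List.head?_eq_some_iff.1 hh
    refine ⟨r, ⟨hc, hh, hl⟩, fun v hv hvT => ?_⟩
    obtain rfl := hT v (List.mem_cons_of_mem x hv) hvT
    exact (List.nodup_cons.1 hnd).1 hv
  · rintro ⟨r, ⟨hc, hh, hl⟩, hr⟩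
    exact ⟨x :: r, hc, h.nodup_of_isChain hc, hh, hl,
      fun v hv hvT => (List.mem_cons.1 hv).resolve_right fun hv => hr v hv hvT⟩

theorem zReach_refl (x : V) : ZReach E T t x x :=
  ⟨[x], .singleton x, List.nodup_singleton x, rfl, rfl, fun _ hv _ => List.eq_of_mem_singleton hv⟩

theorem ZReach.reflTransGen (h : DiAcyclic E) (hz : ZReach E T t x z) : ReflTransGen E x z := by
  obtain ⟨r, hr, -⟩ := (zReach_iff_exists_diWalk h).1 hz
  exact hr.reflTransGen

theorem ZReach.tail (h : DiAcyclic E) (hz : ZReach E T t x z) (hzy : E z y) (hy : y ∉ T ∪ {t}) :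
    ZReach E T t x y := by
  obtain ⟨r, hr, hrT⟩ := (zReach_iff_exists_diWalk h).1 hz
  refine (zReach_iff_exists_diWalk h).2 ⟨r ++ [y], hr.concat hzy, ?_⟩
  simp only [List.mem_append, List.mem_singleton]
  rintro v (hv | rfl)
  exacts [hrT v hv, hy]

end Acyclic

section Tracking

variable {V : Type*} [DecidableEq V] {E : V → V → Prop} {s t x y z₁ z₂ : V} {T : Finset V}

theorem Tracking.eq_of_zReach_of_rel (hacyc : DiAcyclic E)
    (hvert : ∀ v : V, ∃ p : List V, DiPath E s t p ∧ v ∈ p) (hT : Tracking E s t T)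
    (h₁ : ZReach E T t x z₁) (h₂ : ZReach E T t x z₂) (e₁ : E z₁ y) (e₂ : E z₂ y) :
    z₁ = z₂ := by
  obtain ⟨p, hp, hxp⟩ := hvert x
  obtain ⟨A, -, -, hA, -⟩ := (hacyc.diPath_iff.1 hp).split hxp
  obtain ⟨q, hq, hyq⟩ := hvert y
  obtain ⟨-, C, -, -, hC⟩ := (hacyc.diPath_iff.1 hq).split hyq
  have hpath {r z} (hr : DiWalk E x z (x :: r)) (e : E z y) :
      DiPath E s t ((A ++ [x]) ++ (r ++ y :: C)) :=
    hacyc.diPath_iff.2 (hA.append (by simpa using (hr.concat e).append hC))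
  have htrace {r} (hr : ∀ v ∈ r, v ∉ T ∪ {t}) :
      ((A ++ [x]) ++ (r ++ y :: C)).toFinset ∩ T = ((A ++ [x]) ++ y :: C).toFinset ∩ T := by
    ext v
    have := hr v
    simp only [mem_inter, List.mem_toFinset, List.mem_append, mem_union, not_or] at this ⊢
    tauto
  obtain ⟨r₁, hr₁, hr₁T⟩ := (zReach_iff_exists_diWalk hacyc).1 h₁
  obtain ⟨r₂, hr₂, hr₂T⟩ := (zReach_iff_exists_diWalk hacyc).1 h₂
  have := hT _ _ (hpath hr₁ e₁) (hpath hr₂ e₂) (by rw [htrace hr₁T, htrace hr₂T])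
  obtain rfl : r₁ = r₂ := by simpa using this
  simpa [hr₁.2.2] using hr₂.2.2

theorem exists_zReach_of_reflTransGen (hacyc : DiAcyclic E) (hsink : ∀ v : V, ¬ E t v)
    (h : ReflTransGen E s z₁) (hz : z₁ ≠ t) : ∃ x ∈ insert s T, ZReach E T t x z₁ := by
  induction h with
  | refl => exact ⟨s, mem_insert_self s T, zReach_refl s⟩
  | @tail u v _ huv ih =>
    obtain ⟨x, hx, hxu⟩ := ih (by rintro rfl; exact hsink v huv)
    by_cases hv : v ∈ T
    · exact ⟨v, mem_insert_of_mem hv, zReach_refl v⟩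
    · exact ⟨x, hx, hxu.tail hacyc huv (by simp [hv, hz])⟩

end Tracking

section Counting

variable {V : Type*} [Fintype V] {E : V → V → Prop} [DecidableRel E] {t z : V}

theorem outdeg_pos_of_reflTransGen (h : ReflTransGen E z t) (hz : z ≠ t) : 0 < outdeg E z := by
  obtain ⟨y, hzy, -⟩ := h.cases_head.resolve_left hz
  exact card_pos.2 ⟨y, by simpa using hzy⟩

variable [DecidableEq V] {s x : V} {T : Finset V}

open Classical in
noncomputable def zReachFinset (E : V → V → Prop) (T : Finset V) (t x : V) : Finset V :=
  {z | ZReach E T t x z ∧ z ≠ t}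

omit [DecidableRel E] in
theorem mem_zReachFinset : z ∈ zReachFinset E T t x ↔ ZReach E T t x z ∧ z ≠ t := by
  simp [zReachFinset]

theorem sum_outdeg_zReachFinset_le (hacyc : DiAcyclic E)
    (hvert : ∀ v : V, ∃ p : List V, DiPath E s t p ∧ v ∈ p) (hT : Tracking E s t T) (x : V) :
    ∑ z ∈ zReachFinset E T t x, outdeg E z ≤ #(zReachFinset E T t x) + #T := by
  set Z := zReachFinset E T t x
  set out : V → Finset V := fun z => {y | E z y}
  have hdisj : (Z : Set V).PairwiseDisjoint out := by
    intro z₁ hz₁ z₂ hz₂ hne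
    refine disjoint_left.2 fun y hy₁ hy₂ => hne ?_
    exact hT.eq_of_zReach_of_rel hacyc hvert (mem_zReachFinset.1 hz₁).1
      (mem_zReachFinset.1 hz₂).1 (by simpa [out] using hy₁) (by simpa [out] using hy₂)
  have hsub : Z.biUnion out ⊆ (Z ∪ (T ∪ {t})).erase x := by
    intro y hy
    obtain ⟨z, hz, hzy⟩ := mem_biUnion.1 hy
    replace hzy : E z y := by simpa [out] using hzy
    obtain ⟨hxz, -⟩ := mem_zReachFinset.1 hz
    refine mem_erase.2 ⟨?_, ?_⟩
    · rintro rfl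
      exact hacyc y (.tail' (hxz.reflTransGen hacyc) hzy)
    · by_cases hyT : y ∈ T ∪ {t}
      · exact mem_union_right _ hyT
      · refine mem_union_left _ (mem_zReachFinset.2 ⟨hxz.tail hacyc hzy hyT, ?_⟩)
        rintro rfl
        simp at hyT
  have hx : x ∈ Z ∪ (T ∪ {t}) := by
    by_cases hxt : x = t
    · simp [hxt]
    · exact mem_union_left _ (mem_zReachFinset.2 ⟨zReach_refl x, hxt⟩)
  refine Nat.le_of_lt_succ ?_
  calc ∑ z ∈ Z, outdeg E z = #(Z.biUnion out) := (card_biUnion hdisj).symm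
    _ ≤ #((Z ∪ (T ∪ {t})).erase x) := card_le_card hsub
    _ < #(Z ∪ (T ∪ {t})) := card_erase_lt_of_mem hx
    _ ≤ #Z + #T + 1 := by grw [card_union_le, card_union_le, card_singleton, add_assoc]

theorem sum_outdeg_sub_one_zReachFinset_le (hacyc : DiAcyclic E)
    (hvert : ∀ v : V, ∃ p : List V, DiPath E s t p ∧ v ∈ p) (hT : Tracking E s t T) (x : V) :
    ∑ z ∈ zReachFinset E T t x, ((outdeg E z : ℤ) - 1) ≤ #T := by
  have h : ((∑ z ∈ zReachFinset E T t x, outdeg E z : ℕ) : ℤ) ≤ #(zReachFinset E T t x) + #T :=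
    mod_cast sum_outdeg_zReachFinset_le hacyc hvert hT x
  rw [sum_sub_distrib, sum_const, nsmul_one]
  push_cast at h
  linarith

end Counting

theorem sum_outdeg_le_tracking_sq_general {V : Type*} [Fintype V] [DecidableEq V]
    (E : V → V → Prop) [DecidableRel E] (s t : V)
    (hacyc : DiAcyclic E)
    (hsink : ∀ v : V, ¬ E t v)
    (hvert : ∀ v : V, ∃ p : List V, DiPath E s t p ∧ v ∈ p)
    (T : Finset V) (hT : Tracking E s t T) :
    (∑ z : V, ((outdeg E z : ℤ) - 1)) ≤ ((T.card : ℤ) + 1) ^ 2 - 1 := by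
  have hreach (v : V) : ReflTransGen E s v ∧ ReflTransGen E v t := by
    obtain ⟨p, hp, hv⟩ := hvert v
    obtain ⟨_, _, _, hsv, hvt⟩ := (hacyc.diPath_iff.1 hp).split hv
    exact ⟨hsv.reflTransGen, hvt.reflTransGen⟩
  set Z := (insert s T).biUnion (zReachFinset E T t)
  have hcover : univ.erase t ⊆ Z := by
    intro z hz
    have hzt := ne_of_mem_erase hz
    obtain ⟨x, hx, hxz⟩ := exists_zReach_of_reflTransGen (T := T) hacyc hsink (hreach z).1 hzt
    exact mem_biUnion.2 ⟨x, hx, mem_zReachFinset.2 ⟨hxz, hzt⟩⟩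
  have hnonneg : ∀ z ∈ Z, 0 ≤ (outdeg E z : ℤ) - 1 := by
    intro z hz
    obtain ⟨x, -, hz⟩ := mem_biUnion.1 hz
    have := outdeg_pos_of_reflTransGen (hreach z).2 (mem_zReachFinset.1 hz).2
    omega
  calc ∑ z, ((outdeg E z : ℤ) - 1)
      = ((outdeg E t : ℤ) - 1) + ∑ z ∈ univ.erase t, ((outdeg E z : ℤ) - 1) :=
        (add_sum_erase _ _ (mem_univ t)).symm
    _ ≤ -1 + ∑ x ∈ insert s T, ∑ z ∈ zReachFinset E T t x, ((outdeg E z : ℤ) - 1) := by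
      gcongr ?_ + ?_
      · simp [outdeg, hsink]
      · exact (sum_le_sum_of_subset_of_nonneg hcover fun z hz _ => hnonneg z hz).trans
          (sum_biUnion_le_sum_sum hnonneg)
    _ ≤ -1 + #(insert s T) * #T := by
      grw [sum_le_card_nsmul _ _ _ fun x _ => sum_outdeg_sub_one_zReachFinset_le hacyc hvert hT x]
      simp
    _ ≤ (#T + 1) ^ 2 - 1 := by
      have : (#(insert s T) : ℤ) ≤ #T + 1 := mod_cast card_insert_le s T
      nlinarith

/-- `∑_{z ∈ V} (outdeg z − 1) ≤ (|T| + 1)² − 1` for a tracking set `T`. -/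
theorem sum_outdeg_le_tracking_sq {V : Type*} [Fintype V] [DecidableEq V]
    (E : V → V → Prop) [DecidableRel E] (s t : V)
    (hacyc : DiAcyclic E)
    (hsrc : ∀ v : V, ¬ E v s) (hsink : ∀ v : V, ¬ E t v)
    (hvert : ∀ v : V, ∃ p : List V, DiPath E s t p ∧ v ∈ p)
    (hedge : ∀ u v : V, E u v → ∃ p : List V, DiPath E s t p ∧ [u, v] <:+: p)
    (T : Finset V) (hT : Tracking E s t T) :
    (∑ z : V, ((outdeg E z : ℤ) - 1)) ≤ ((T.card : ℤ) + 1) ^ 2 - 1 :=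
  sum_outdeg_le_tracking_sq_general E s t hacyc hsink hvert T hT
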